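/- arXiv:2604.21865 — 2 statements merged into one kernel-verified Lean document; each statement's English description precedes it below -/
import Mathlib

section
/- Under the hierarchical model with likelihood p(x, s² | θ, σ²) = C_k (s²)^{k/2−1} (σ²)^{−(k+1)/2} exp(−((x−θ)² + k s²)/(2σ²)) and arbitrary prior g, the joint posterior MGF of (U, V) = (θ/σ², 1/σ²) given (x, s²) satisfies, for all (t₁, t₂) near (0,0) with s² − (2t₁x + t₁² + 2t₂)/k > 0: E[exp(t₁θ/σ² + t₂/σ²) | x, s²] = (s²/(s² − (2t₁x + t₁² + 2t₂)/k))^{k/2−1} · f(x + t₁, s² − (2t₁x + t₁² + 2t₂)/k) / f(x, s²). -/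
open Real MeasureTheory

/-- The normalizing constant `C_k = k^{k/2} / (√(2π) Γ(k/2) 2^{k/2})`. -/
noncomputable def Ck (k : ℝ) : ℝ :=
  k ^ (k / 2) / (Real.sqrt (2 * Real.pi) * Real.Gamma (k / 2) * 2 ^ (k / 2))

/-- The joint likelihood `p(x, s² | θ, σ²)` of the heteroscedastic normal means model. -/
noncomputable def lik (k x s2 θ σ2 : ℝ) : ℝ :=
  Ck k * s2 ^ (k / 2 - 1) * σ2 ^ (-((k + 1) / 2)) *
    Real.exp (-(((x - θ) ^ 2 + k * s2) / (2 * σ2)))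

/-- `∫∫ h(θ, σ²) p(x, s² | θ, σ²) g(θ, σ²) dθ dσ²`, integrating `σ²` over `(0, ∞)`. -/
noncomputable def postInt (k : ℝ) (g : ℝ → ℝ → ℝ) (x s2 : ℝ) (h : ℝ → ℝ → ℝ) : ℝ :=
  ∫ θ : ℝ, ∫ σ2 in Set.Ioi (0 : ℝ), h θ σ2 * lik k x s2 θ σ2 * g θ σ2

/-- The joint marginal density `f(x, s²) = ∬ p(x, s² | θ, σ²) g(θ, σ²) dθ dσ²`. -/
noncomputable def marg (k : ℝ) (g : ℝ → ℝ → ℝ) (x s2 : ℝ) : ℝ :=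
  postInt k g x s2 (fun _ _ => 1)

/-- The posterior expectation `E[h(θ, σ²) | x, s²]` under the posterior density
`p(x, s² | θ, σ²) g(θ, σ²) / f(x, s²)`. -/
noncomputable def postExp (k : ℝ) (g : ℝ → ℝ → ℝ) (x s2 : ℝ) (h : ℝ → ℝ → ℝ) : ℝ :=
  postInt k g x s2 h / marg k g x s2

/-- Completing the square in `θ`. -/
theorem tilt_exponent_eq {k : ℝ} (hk : k ≠ 0) (x s2 t1 t2 θ : ℝ) {σ2 : ℝ} (hσ2 : σ2 ≠ 0) :
    t1 * θ / σ2 + t2 / σ2 + -(((x - θ) ^ 2 + k * s2) / (2 * σ2)) =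
      -(((x + t1 - θ) ^ 2 + k * (s2 - (2 * t1 * x + t1 ^ 2 + 2 * t2) / k)) / (2 * σ2)) := by
  field_simp
  ring

theorem exp_tilt_mul_lik {k : ℝ} (hk : k ≠ 0) (x t1 t2 θ : ℝ) {s2 σ2 : ℝ} (hs2 : 0 < s2)
    (hs2' : 0 < s2 - (2 * t1 * x + t1 ^ 2 + 2 * t2) / k) (hσ2 : σ2 ≠ 0) :
    Real.exp (t1 * θ / σ2 + t2 / σ2) * lik k x s2 θ σ2 =
      (s2 / (s2 - (2 * t1 * x + t1 ^ 2 + 2 * t2) / k)) ^ (k / 2 - 1) *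
        lik k (x + t1) (s2 - (2 * t1 * x + t1 ^ 2 + 2 * t2) / k) θ σ2 := by
  set s2' := s2 - (2 * t1 * x + t1 ^ 2 + 2 * t2) / k
  have hexp : Real.exp (t1 * θ / σ2 + t2 / σ2) * Real.exp (-(((x - θ) ^ 2 + k * s2) / (2 * σ2))) =
      Real.exp (-(((x + t1 - θ) ^ 2 + k * s2') / (2 * σ2))) := by
    rw [← Real.exp_add, tilt_exponent_eq hk x s2 t1 t2 θ hσ2]
  have hpow : s2 ^ (k / 2 - 1) = (s2 / s2') ^ (k / 2 - 1) * s2' ^ (k / 2 - 1) := by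
    rw [Real.div_rpow hs2.le hs2'.le, div_mul_cancel₀ _ (Real.rpow_pos_of_pos hs2' _).ne']
  unfold lik
  rw [hpow, ← hexp]
  ring

theorem postInt_exp_tilt {k : ℝ} (hk : k ≠ 0) (g : ℝ → ℝ → ℝ) (x t1 t2 : ℝ) {s2 : ℝ}
    (hs2 : 0 < s2) (hs2' : 0 < s2 - (2 * t1 * x + t1 ^ 2 + 2 * t2) / k) :
    postInt k g x s2 (fun θ σ2 => Real.exp (t1 * θ / σ2 + t2 / σ2)) =
      (s2 / (s2 - (2 * t1 * x + t1 ^ 2 + 2 * t2) / k)) ^ (k / 2 - 1) *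
        marg k g (x + t1) (s2 - (2 * t1 * x + t1 ^ 2 + 2 * t2) / k) := by
  unfold marg postInt
  simp_rw [← integral_const_mul]
  refine integral_congr_ae (Filter.Eventually.of_forall fun θ => ?_)
  refine setIntegral_congr_fun measurableSet_Ioi fun σ2 (hσ2 : 0 < σ2) => ?_
  simp only [exp_tilt_mul_lik hk x t1 t2 θ hs2 hs2' hσ2.ne']
  ring

theorem posterior_mgf_UV_general (k : ℝ) (hk : 0 < k) (g : ℝ → ℝ → ℝ)
    (x s2 : ℝ) (hs2 : 0 < s2) :
    ∀ t1 t2 : ℝ, 0 < s2 - (2 * t1 * x + t1 ^ 2 + 2 * t2) / k →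
      postExp k g x s2 (fun θ σ2 => Real.exp (t1 * θ / σ2 + t2 / σ2)) =
        (s2 / (s2 - (2 * t1 * x + t1 ^ 2 + 2 * t2) / k)) ^ (k / 2 - 1) *
          marg k g (x + t1) (s2 - (2 * t1 * x + t1 ^ 2 + 2 * t2) / k) / marg k g x s2 := by
  intro t1 t2 hs2'
  rw [postExp, postInt_exp_tilt hk.ne' g x t1 t2 hs2 hs2']

/-- the joint posterior MGF of `(U, V) = (θ/σ², 1/σ²)` given `(x, s²)`
satisfies, for all `(t₁, t₂)` near `(0,0)` with `s² − (2t₁x + t₁² + 2t₂)/k > 0`,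
`E[exp(t₁θ/σ² + t₂/σ²) | x, s²]
  = (s²/(s² − (2t₁x+t₁²+2t₂)/k))^{k/2−1} f(x+t₁, s² − (2t₁x+t₁²+2t₂)/k)/f(x, s²)`. -/
theorem posterior_mgf_UV (k : ℝ) (hk : 0 < k) (g : ℝ → ℝ → ℝ)
    (hg : ∀ θ σ2, 0 ≤ g θ σ2)
    (hgint : ∫ θ : ℝ, ∫ σ2 in Set.Ioi (0 : ℝ), g θ σ2 = 1)
    (x s2 : ℝ) (hs2 : 0 < s2) (hf : 0 < marg k g x s2)
    (hint : ∀ t1 t2 : ℝ, Integrable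
      (fun p : ℝ × ℝ => Real.exp (t1 * p.1 / p.2 + t2 / p.2) * lik k x s2 p.1 p.2 * g p.1 p.2)
      ((volume : Measure ℝ).prod (volume.restrict (Set.Ioi 0)))) :
    ∀ t1 t2 : ℝ, 0 < s2 - (2 * t1 * x + t1 ^ 2 + 2 * t2) / k →
      postExp k g x s2 (fun θ σ2 => Real.exp (t1 * θ / σ2 + t2 / σ2)) =
        (s2 / (s2 - (2 * t1 * x + t1 ^ 2 + 2 * t2) / k)) ^ (k / 2 - 1) *
          marg k g (x + t1) (s2 - (2 * t1 * x + t1 ^ 2 + 2 * t2) / k) / marg k g x s2 :=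
  posterior_mgf_UV_general k hk g x s2 hs2
end

section
/- For the MGF of V = 1/σ² evaluated at t < 0 (always valid): in the hierarchical model, for every t ≤ 0, E[exp(t/σ²) | x, s²] = (s²/(s² − 2t/k))^{k/2−1} f(x, s² − 2t/k) / f(x, s²), and in particular this quantity is at most 1 and the condition s² − 2t/k > 0 holds automatically for t ≤ 0 and s² > 0. -/
open Real MeasureTheory

lemma Ck_nonneg {k : ℝ} (hk : 0 < k) : 0 ≤ Ck k := by
  have := Real.Gamma_pos_of_pos (half_pos hk)
  unfold Ck
  positivity

lemma lik_nonneg {k : ℝ} (hk : 0 < k) (x : ℝ) {s2 : ℝ} (hs2 : 0 ≤ s2) (θ : ℝ) {σ2 : ℝ}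
    (hσ2 : 0 ≤ σ2) : 0 ≤ lik k x s2 θ σ2 := by
  have := Ck_nonneg hk
  unfold lik
  positivity

/-- Since `t/σ² − k s²/(2σ²) = −k (s² − 2t/k)/(2σ²)`, the tilt `exp (t/σ²)` only shifts `s²`;
the prefactor restores the `(s²)^{k/2−1}` of the original likelihood. -/
lemma exp_div_mul_lik {k : ℝ} (hk : k ≠ 0) (x : ℝ) {s2 t : ℝ} (hs2 : 0 ≤ s2)
    (hs2' : 0 < s2 - 2 * t / k) (θ σ2 : ℝ) :
    Real.exp (t / σ2) * lik k x s2 θ σ2 =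
      (s2 / (s2 - 2 * t / k)) ^ (k / 2 - 1) * lik k x (s2 - 2 * t / k) θ σ2 := by
  have hexp : Real.exp (t / σ2) * Real.exp (-(((x - θ) ^ 2 + k * s2) / (2 * σ2))) =
      Real.exp (-(((x - θ) ^ 2 + k * (s2 - 2 * t / k)) / (2 * σ2))) := by
    rw [← Real.exp_add, mul_sub, mul_div_cancel₀ _ hk]
    congr 1
    ring
  have hpow : s2 ^ (k / 2 - 1) =
      (s2 / (s2 - 2 * t / k)) ^ (k / 2 - 1) * (s2 - 2 * t / k) ^ (k / 2 - 1) := by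
    rw [Real.div_rpow hs2 hs2'.le, div_mul_cancel₀ _ (Real.rpow_pos_of_pos hs2' _).ne']
  unfold lik
  rw [hpow, ← hexp]
  ring

lemma postInt_exp_div_eq_mul_marg {k : ℝ} (g : ℝ → ℝ → ℝ) (x : ℝ) (hk : k ≠ 0) {s2 t : ℝ}
    (hs2 : 0 ≤ s2) (hs2' : 0 < s2 - 2 * t / k) :
    postInt k g x s2 (fun _ σ2 => Real.exp (t / σ2)) =
      (s2 / (s2 - 2 * t / k)) ^ (k / 2 - 1) * marg k g x (s2 - 2 * t / k) := by
  simp only [marg, postInt, ← integral_const_mul, one_mul, ← mul_assoc,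
    exp_div_mul_lik hk x hs2 hs2']

lemma postInt_mono {k : ℝ} (hk : 0 < k) {g : ℝ → ℝ → ℝ} (hg : ∀ θ σ2, 0 ≤ g θ σ2) (x : ℝ)
    {s2 : ℝ} (hs2 : 0 ≤ s2) {h₁ h₂ : ℝ → ℝ → ℝ}
    (hint₁ : Integrable (fun p : ℝ × ℝ => h₁ p.1 p.2 * lik k x s2 p.1 p.2 * g p.1 p.2)
      ((volume : Measure ℝ).prod (volume.restrict (Set.Ioi 0))))
    (hint₂ : Integrable (fun p : ℝ × ℝ => h₂ p.1 p.2 * lik k x s2 p.1 p.2 * g p.1 p.2)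
      ((volume : Measure ℝ).prod (volume.restrict (Set.Ioi 0))))
    (hle : ∀ θ σ2, 0 < σ2 → h₁ θ σ2 ≤ h₂ θ σ2) :
    postInt k g x s2 h₁ ≤ postInt k g x s2 h₂ := by
  rw [postInt, postInt, ← integral_prod _ hint₁, ← integral_prod _ hint₂]
  refine integral_mono_ae hint₁ hint₂ ?_
  filter_upwards [Measure.quasiMeasurePreserving_snd.ae (ae_restrict_mem measurableSet_Ioi)]
    with p (hp : 0 < p.2)
  gcongr
  · exact hg _ _
  · exact lik_nonneg hk x hs2 _ hp.le
  · exact hle _ _ hp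

theorem posterior_mgf_V_nonpos_general (k : ℝ) (hk : 0 < k) (g : ℝ → ℝ → ℝ)
    (hg : ∀ θ σ2, 0 ≤ g θ σ2)
    (x s2 : ℝ) (hs2 : 0 < s2) (hf : 0 < marg k g x s2)
    (hint : ∀ t : ℝ, Integrable
      (fun p : ℝ × ℝ => Real.exp (t / p.2) * lik k x s2 p.1 p.2 * g p.1 p.2)
      ((volume : Measure ℝ).prod (volume.restrict (Set.Ioi 0)))) :
    ∀ t : ℝ, t ≤ 0 →
      0 < s2 - 2 * t / k ∧
      postExp k g x s2 (fun _ σ2 => Real.exp (t / σ2)) =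
        (s2 / (s2 - 2 * t / k)) ^ (k / 2 - 1) *
          marg k g x (s2 - 2 * t / k) / marg k g x s2 ∧
      postExp k g x s2 (fun _ σ2 => Real.exp (t / σ2)) ≤ 1 := by
  intro t ht
  have hs2' : 0 < s2 - 2 * t / k := by
    have : 2 * t / k ≤ 0 := div_nonpos_of_nonpos_of_nonneg (by linarith) hk.le
    linarith
  have hmgf := postInt_exp_div_eq_mul_marg g x hk.ne' hs2.le hs2'
  have hle : postInt k g x s2 (fun _ σ2 => Real.exp (t / σ2)) ≤ marg k g x s2 :=
    postInt_mono hk hg x hs2.le (hint t) (by simpa using hint 0)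
      fun _ _ hσ2 => Real.exp_le_one_iff.mpr (div_nonpos_of_nonpos_of_nonneg ht hσ2.le)
  exact ⟨hs2', by rw [postExp, hmgf], (div_le_one hf).mpr hle⟩

/-- for every `t ≤ 0`, the condition `s² − 2t/k > 0` holds automatically,
the MGF identity
`E[exp(t/σ²) | x, s²] = (s²/(s² − 2t/k))^{k/2−1} f(x, s² − 2t/k)/f(x, s²)` holds,
and this quantity is at most `1`. -/
theorem posterior_mgf_V_nonpos (k : ℝ) (hk : 0 < k) (g : ℝ → ℝ → ℝ)
    (hg : ∀ θ σ2, 0 ≤ g θ σ2)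
    (hgint : ∫ θ : ℝ, ∫ σ2 in Set.Ioi (0 : ℝ), g θ σ2 = 1)
    (x s2 : ℝ) (hs2 : 0 < s2) (hf : 0 < marg k g x s2)
    (hint : ∀ t : ℝ, Integrable
      (fun p : ℝ × ℝ => Real.exp (t / p.2) * lik k x s2 p.1 p.2 * g p.1 p.2)
      ((volume : Measure ℝ).prod (volume.restrict (Set.Ioi 0)))) :
    ∀ t : ℝ, t ≤ 0 →
      0 < s2 - 2 * t / k ∧
      postExp k g x s2 (fun _ σ2 => Real.exp (t / σ2)) =
        (s2 / (s2 - 2 * t / k)) ^ (k / 2 - 1) *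
          marg k g x (s2 - 2 * t / k) / marg k g x s2 ∧
      postExp k g x s2 (fun _ σ2 => Real.exp (t / σ2)) ≤ 1 :=
  posterior_mgf_V_nonpos_general k hk g hg x s2 hs2 hf hint
end
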